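/- Nonnegativity and boundedness of stabilizer Rényi entropies: for any n-qubit pure state ψ and any α ≥ 0, 0 ≤ M_α(ψ) ≤ n, with M_α(ψ) = 0 whenever ψ is a pure stabilizer state. -/

import Mathlib

/-!
For a unit vector `u`, `Ξ(a, b) = |tr(P_{a,b} ψ)|² / 2ⁿ` is a probability vector on the `4ⁿ` Pauli
labels: summing over `b` is Parseval for the Walsh transform of `y ↦ u y * conj (u (y + a))`, and
summing that over `a` gives `‖u‖⁴ = 1`. Each entry is at most `2⁻ⁿ`, since
`|tr(P ψ)| ≤ ∑ |u y| |u (y + a)| ≤ ‖u‖²` by AM–GM. Every Rényi entropy of a probability vector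
bounded by `2⁻ⁿ` is at least `n` (termwise comparison with `q * 2ⁿ⁽¹⁻ᵅ⁾`) and, for `α ≥ 0`, at most
`log₂ 4ⁿ = 2n` (Jensen with uniform weights). For a stabilizer state the `2ⁿ` labels with
`|tr(P ψ)| = 1` already carry mass `1`, so `Ξ` is uniform on them and every Rényi entropy is `n`.
-/

open scoped BigOperators
open ComplexConjugate
open scoped ComplexOrder

noncomputable def traceNorm {ι : Type*} [Fintype ι] [DecidableEq ι] (A : Matrix ι ι ℂ) : ℝ :=
  (((Matrix.posSemidef_conjTranspose_mul_self A).1.eigenvectorUnitary.1 *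
      Matrix.diagonal (fun i =>
        ((Real.sqrt ((Matrix.posSemidef_conjTranspose_mul_self A).1.eigenvalues i) : ℝ) : ℂ)) *
      (star (Matrix.posSemidef_conjTranspose_mul_self A).1.eigenvectorUnitary :
        Matrix ι ι ℂ)).trace).re

noncomputable def proj {ι : Type*} (v : ι → ℂ) : Matrix ι ι ℂ :=
  Matrix.of fun i j => v i * conj (v j)

noncomputable def tensorPow {ι : Type*} (A : Matrix ι ι ℂ) (t : ℕ) :
    Matrix (Fin t → ι) (Fin t → ι) ℂ :=
  Matrix.of fun x y => ∏ i, A (x i) (y i)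

noncomputable def pauli {n : ℕ} (a b : Fin n → ZMod 2) :
    Matrix (Fin n → ZMod 2) (Fin n → ZMod 2) ℂ :=
  Matrix.of fun x y =>
    if x = y + a then
      Complex.I ^ (∑ i, (a i * b i).val) * (-1 : ℂ) ^ (∑ i, (b i * y i).val)
    else 0

noncomputable def xi {n : ℕ} (ρ : Matrix (Fin n → ZMod 2) (Fin n → ZMod 2) ℂ)
    (p : (Fin n → ZMod 2) × (Fin n → ZMod 2)) : ℝ :=
  Complex.normSq ((pauli p.1 p.2 * ρ).trace) / 2 ^ n

/-- α-stabilizer Rényi entropy M_α(ψ) = S_α(Ξ_ψ) − log d, covering α = 0, α = 1 and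
generic α via the classical Rényi entropy (base-2 logs). -/
noncomputable def MStab (α : ℝ) {n : ℕ}
    (ρ : Matrix (Fin n → ZMod 2) (Fin n → ZMod 2) ℂ) : ℝ :=
  (if α = 1 then
      - ∑ p : (Fin n → ZMod 2) × (Fin n → ZMod 2), xi ρ p * Real.logb 2 (xi ρ p)
    else if α = 0 then
      Real.logb 2 (({p : (Fin n → ZMod 2) × (Fin n → ZMod 2) | xi ρ p ≠ 0}.ncard : ℝ))
    else
      (1 / (1 - α)) * Real.logb 2
        (∑ p : (Fin n → ZMod 2) × (Fin n → ZMod 2), xi ρ p ^ α)) - n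

/-- A unit vector represents a pure stabilizer state iff its stabilizer group
G_ψ = {P : tr(Pψ) = ±1} has the maximal size 2^n. -/
def IsStabVec {n : ℕ} (u : (Fin n → ZMod 2) → ℂ) : Prop :=
  {p : (Fin n → ZMod 2) × (Fin n → ZMod 2) |
      Complex.normSq ((pauli p.1 p.2 * proj u).trace) = 1}.ncard = 2 ^ n

open Finset Real

section RenyiEntropy

variable {ι : Type*} [Fintype ι] {q : ι → ℝ}

/-- The bracket in `MStab`: the base-2 Rényi entropy of `q`, with the limiting cases `α = 1`
(Shannon) and `α = 0` (log of the support size) written out. -/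
noncomputable def renyiEntropy (α : ℝ) (q : ι → ℝ) : ℝ :=
  if α = 1 then - ∑ i, q i * Real.logb 2 (q i)
  else if α = 0 then Real.logb 2 (({i | q i ≠ 0}.ncard : ℝ))
  else (1 / (1 - α)) * Real.logb 2 (∑ i, q i ^ α)

lemma exists_pos_of_sum_eq_one (hq0 : ∀ i, 0 ≤ q i) (hq1 : ∑ i, q i = 1) : ∃ i, 0 < q i := by
  obtain ⟨i, -, hi⟩ := exists_ne_zero_of_sum_ne_zero (hq1.trans_ne one_ne_zero)
  exact ⟨i, (hq0 i).lt_of_ne' hi⟩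

lemma card_pos_of_sum_eq_one (hq1 : ∑ i, q i = 1) : (0 : ℝ) < Fintype.card ι := by
  obtain ⟨i, -, -⟩ := exists_ne_zero_of_sum_ne_zero (hq1.trans_ne one_ne_zero)
  have : Nonempty ι := ⟨i⟩
  positivity

lemma sum_rpow_pos (hq0 : ∀ i, 0 ≤ q i) (hq1 : ∑ i, q i = 1) (α : ℝ) :
    0 < ∑ i, q i ^ α := by
  obtain ⟨i, hi⟩ := exists_pos_of_sum_eq_one hq0 hq1
  exact sum_pos' (fun j _ => rpow_nonneg (hq0 j) α) ⟨i, mem_univ i, rpow_pos_of_pos hi α⟩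

/-- In this form both bounds on the generic branch become comparisons of `(∑ qᵢ ^ α) ^ (1 - α)⁻¹`,
whatever the sign of `1 - α`. -/
lemma one_div_mul_logb_sum_rpow (hq0 : ∀ i, 0 ≤ q i) (hq1 : ∑ i, q i = 1) (α : ℝ) :
    1 / (1 - α) * logb 2 (∑ i, q i ^ α) = logb 2 ((∑ i, q i ^ α) ^ (1 - α)⁻¹) := by
  rw [logb_rpow_eq_mul_logb_of_pos (sum_rpow_pos hq0 hq1 α), one_div]

lemma mul_rpow_one_sub_le_rpow {x D α : ℝ} (hx : 0 ≤ x) (hD : 0 < D) (hxD : x ≤ D⁻¹)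
    (hα : α ≤ 1) : x * D ^ (1 - α) ≤ x ^ α := by
  rcases hx.eq_or_lt with rfl | hx
  · simpa using rpow_nonneg le_rfl α
  calc x * D ^ (1 - α) = x * D⁻¹ ^ (α - 1) := by
        rw [inv_rpow hD.le, ← rpow_neg hD.le, neg_sub]
    _ ≤ x * x ^ (α - 1) :=
        mul_le_mul_of_nonneg_left (rpow_le_rpow_of_nonpos hx hxD (by linarith)) hx.le
    _ = x ^ α := by rw [rpow_sub_one hx.ne', mul_div_cancel₀ _ hx.ne']

lemma rpow_le_mul_rpow_one_sub {x D α : ℝ} (hx : 0 ≤ x) (hD : 0 < D) (hxD : x ≤ D⁻¹)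
    (hα : 1 ≤ α) : x ^ α ≤ x * D ^ (1 - α) := by
  rcases hx.eq_or_lt with rfl | hx
  · simp [zero_rpow (by linarith : α ≠ 0)]
  calc x ^ α = x * x ^ (α - 1) := by rw [rpow_sub_one hx.ne', mul_div_cancel₀ _ hx.ne']
    _ ≤ x * D⁻¹ ^ (α - 1) := by gcongr
    _ = x * D ^ (1 - α) := by rw [inv_rpow hD.le, ← rpow_neg hD.le, neg_sub]

lemma le_sum_rpow_rpow_inv {D α : ℝ} (hD : 0 < D) (hq0 : ∀ i, 0 ≤ q i) (hq1 : ∑ i, q i = 1)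
    (hqD : ∀ i, q i ≤ D⁻¹) (hα : α ≠ 1) : D ≤ (∑ i, q i ^ α) ^ (1 - α)⁻¹ := by
  have hsum : ∑ i, q i * D ^ (1 - α) = D ^ (1 - α) := by rw [← sum_mul, hq1, one_mul]
  rcases hα.lt_or_gt with hα | hα
  · rw [le_rpow_inv_iff_of_pos hD.le (sum_rpow_pos hq0 hq1 α).le (by linarith), ← hsum]
    exact sum_le_sum fun i _ => mul_rpow_one_sub_le_rpow (hq0 i) hD (hqD i) hα.le
  · rw [le_rpow_inv_iff_of_neg hD (sum_rpow_pos hq0 hq1 α) (by linarith), ← hsum]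
    exact sum_le_sum fun i _ => rpow_le_mul_rpow_one_sub (hq0 i) hD (hqD i) hα.le

lemma mul_inv_rpow_eq_rpow_one_sub {N : ℝ} (hN : 0 < N) (α : ℝ) :
    N * N⁻¹ ^ α = N ^ (1 - α) := by
  rw [inv_rpow hN.le, rpow_sub hN, rpow_one, div_eq_mul_inv]

lemma sum_rpow_rpow_inv_le_card {α : ℝ} (hq0 : ∀ i, 0 ≤ q i) (hq1 : ∑ i, q i = 1)
    (hα0 : 0 ≤ α) (hα1 : α ≠ 1) : (∑ i, q i ^ α) ^ (1 - α)⁻¹ ≤ Fintype.card ι := by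
  have hN := card_pos_of_sum_eq_one hq1
  set N : ℝ := (Fintype.card ι : ℝ)
  have hw : ∑ _i : ι, N⁻¹ = 1 := by simp [N, hN.ne']
  have hmean : ∑ i : ι, N⁻¹ • q i = N⁻¹ := by simp [← mul_sum, hq1]
  have hmean_rpow : ∑ i : ι, N⁻¹ • q i ^ α = N⁻¹ * ∑ i, q i ^ α := by simp [mul_sum]
  rcases hα1.lt_or_gt with hα | hα
  · have := (concaveOn_rpow hα0 hα.le).le_map_sum (t := univ) (w := fun _ => N⁻¹) (p := q)
      (fun _ _ => by positivity) hw (fun i _ => hq0 i)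
    rw [hmean, hmean_rpow] at this
    rw [rpow_inv_le_iff_of_pos (sum_rpow_pos hq0 hq1 α).le hN.le (by linarith),
      ← mul_inv_rpow_eq_rpow_one_sub hN]
    rwa [← inv_mul_le_iff₀ hN]
  · have := (convexOn_rpow hα.le).map_sum_le (t := univ) (w := fun _ => N⁻¹) (p := q)
      (fun _ _ => by positivity) hw (fun i _ => hq0 i)
    rw [hmean, hmean_rpow] at this
    rw [rpow_inv_le_iff_of_neg (sum_rpow_pos hq0 hq1 α) hN (by linarith),
      ← mul_inv_rpow_eq_rpow_one_sub hN]
    rwa [← le_inv_mul_iff₀ hN]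

lemma neg_sum_mul_logb_eq_sum_negMulLog_div (q : ι → ℝ) :
    -∑ i, q i * logb 2 (q i) = (∑ i, negMulLog (q i)) / log 2 := by
  simp only [negMulLog, logb, sum_div, ← sum_neg_distrib]
  congr! 1 with i
  ring

lemma logb_le_neg_sum_mul_logb {D : ℝ} (hD : 0 < D) (hq0 : ∀ i, 0 ≤ q i)
    (hq1 : ∑ i, q i = 1) (hqD : ∀ i, q i ≤ D⁻¹) : logb 2 D ≤ -∑ i, q i * logb 2 (q i) := by
  have hterm : ∀ i, q i * log D ≤ negMulLog (q i) := by
    intro i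
    rcases (hq0 i).eq_or_lt with h | h
    · simp [← h]
    rw [negMulLog, neg_mul, ← mul_neg, ← log_inv]
    exact mul_le_mul_of_nonneg_left (log_le_log hD ((le_inv_comm₀ h hD).mp (hqD i))) h.le
  rw [neg_sum_mul_logb_eq_sum_negMulLog_div, logb,
    div_le_div_iff_of_pos_right (log_pos one_lt_two)]
  calc log D = ∑ i, q i * log D := by rw [← sum_mul, hq1, one_mul]
    _ ≤ ∑ i, negMulLog (q i) := sum_le_sum fun i _ => hterm i

lemma neg_sum_mul_logb_le_logb_card (hq0 : ∀ i, 0 ≤ q i) (hq1 : ∑ i, q i = 1) :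
    -∑ i, q i * logb 2 (q i) ≤ logb 2 (Fintype.card ι) := by
  have hN := card_pos_of_sum_eq_one hq1
  set N : ℝ := (Fintype.card ι : ℝ)
  have hw : ∑ _i : ι, N⁻¹ = 1 := by simp [N, hN.ne']
  have := concaveOn_negMulLog.le_map_sum (t := univ) (w := fun _ => N⁻¹) (p := q)
    (fun _ _ => by positivity) hw (fun i _ => hq0 i)
  simp only [smul_eq_mul, ← mul_sum, hq1, mul_one] at this
  rw [negMulLog, log_inv, neg_mul_neg] at this
  rw [neg_sum_mul_logb_eq_sum_negMulLog_div, logb,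
    div_le_div_iff_of_pos_right (log_pos one_lt_two)]
  exact le_of_mul_le_mul_left this (inv_pos.2 hN)

lemma le_ncard_support {D : ℝ} (hD : 0 < D) (hq1 : ∑ i, q i = 1) (hqD : ∀ i, q i ≤ D⁻¹) :
    D ≤ ({i | q i ≠ 0}.ncard : ℝ) := by
  classical
  have hsupp : {i | q i ≠ 0} = ↑(univ.filter fun i => q i ≠ 0) := by ext; simp
  rw [hsupp, Set.ncard_coe_finset, ← one_mul D, ← le_mul_inv_iff₀ hD, ← hq1,
    ← sum_filter_ne_zero]
  simpa using sum_le_card_nsmul _ q D⁻¹ fun i _ => hqD i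

lemma ncard_support_le_card (q : ι → ℝ) : ({i | q i ≠ 0}.ncard : ℝ) ≤ Fintype.card ι := by
  exact_mod_cast (Set.ncard_le_card _).trans_eq Nat.card_eq_fintype_card

lemma logb_le_renyiEntropy {D : ℝ} (hD : 0 < D) (hq0 : ∀ i, 0 ≤ q i) (hq1 : ∑ i, q i = 1)
    (hqD : ∀ i, q i ≤ D⁻¹) (α : ℝ) : logb 2 D ≤ renyiEntropy α q := by
  unfold renyiEntropy
  split_ifs with h1 h0
  · exact logb_le_neg_sum_mul_logb hD hq0 hq1 hqD
  · exact logb_le_logb_of_le one_lt_two hD (le_ncard_support hD hq1 hqD)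
  · rw [one_div_mul_logb_sum_rpow hq0 hq1]
    exact logb_le_logb_of_le one_lt_two hD (le_sum_rpow_rpow_inv hD hq0 hq1 hqD h1)

lemma renyiEntropy_le_logb_card {α : ℝ} (hα : 0 ≤ α) (hq0 : ∀ i, 0 ≤ q i)
    (hq1 : ∑ i, q i = 1) : renyiEntropy α q ≤ logb 2 (Fintype.card ι) := by
  obtain ⟨i, hi⟩ := exists_pos_of_sum_eq_one hq0 hq1
  unfold renyiEntropy
  split_ifs with h1 h0
  · exact neg_sum_mul_logb_le_logb_card hq0 hq1
  · refine logb_le_logb_of_le one_lt_two ?_ (ncard_support_le_card q)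
    exact_mod_cast (Set.ncard_pos).2 ⟨i, hi.ne'⟩
  · rw [one_div_mul_logb_sum_rpow hq0 hq1]
    exact logb_le_logb_of_le one_lt_two (rpow_pos_of_pos (sum_rpow_pos hq0 hq1 α) _)
      (sum_rpow_rpow_inv_le_card hq0 hq1 hα h1)

noncomputable def uniformOn [DecidableEq ι] (s : Finset ι) (i : ι) : ℝ :=
  if i ∈ s then (#s : ℝ)⁻¹ else 0

lemma eq_uniformOn_of_eq_inv_card [DecidableEq ι] (hq0 : ∀ i, 0 ≤ q i) (hq1 : ∑ i, q i = 1)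
    {s : Finset ι} (hs : s.Nonempty) (hqs : ∀ i ∈ s, q i = (#s : ℝ)⁻¹) :
    q = uniformOn s := by
  have hs_sum : ∑ i ∈ s, q i = 1 := by
    rw [sum_congr rfl hqs, sum_const, nsmul_eq_mul, mul_inv_cancel₀ (by simpa using hs.ne_empty)]
  have hcompl : ∑ i ∈ sᶜ, q i = 0 := by linarith [sum_add_sum_compl s q]
  funext i
  rw [uniformOn]
  split_ifs with hi
  · exact hqs i hi
  · exact (sum_eq_zero_iff_of_nonneg fun j _ => hq0 j).1 hcompl i (mem_compl.2 hi)

lemma renyiEntropy_uniformOn [DecidableEq ι] (α : ℝ) {s : Finset ι} (hs : s.Nonempty) :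
    renyiEntropy α (uniformOn s) = logb 2 #s := by
  have hs : (0 : ℝ) < #s := by exact_mod_cast hs.card_pos
  unfold renyiEntropy
  split_ifs with h1 h0
  · have hterm (i : ι) : uniformOn s i * logb 2 (uniformOn s i)
        = if i ∈ s then (#s : ℝ)⁻¹ * logb 2 (#s : ℝ)⁻¹ else 0 := by
      unfold uniformOn
      split_ifs <;> simp
    simp only [hterm, Fintype.sum_ite_mem, sum_const, nsmul_eq_mul, logb_inv]
    field_simp
  · have hsupp : {i | uniformOn s i ≠ 0} = ↑s := by
      ext i
      by_cases hi : i ∈ s <;> simp [uniformOn, hi, hs.ne']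
    rw [hsupp, Set.ncard_coe_finset]
  · have hterm (i : ι) : uniformOn s i ^ α = if i ∈ s then (#s : ℝ)⁻¹ ^ α else 0 := by
      unfold uniformOn
      split_ifs <;> simp [zero_rpow h0]
    simp only [hterm, Fintype.sum_ite_mem, sum_const, nsmul_eq_mul,
      mul_inv_rpow_eq_rpow_one_sub hs, logb_rpow_eq_mul_logb_of_pos hs]
    field_simp [sub_ne_zero.2 (Ne.symm h1)]

end RenyiEntropy

section Pauli

variable {n : ℕ}

noncomputable def walshChar (b y : Fin n → ZMod 2) : ℂ :=
  (-1) ^ (∑ i, (b i * y i).val)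

lemma norm_walshChar (b y : Fin n → ZMod 2) : ‖walshChar b y‖ = 1 := by
  simp [walshChar]

lemma sum_walshChar_mul_walshChar (y z : Fin n → ZMod 2) :
    ∑ b, walshChar b y * walshChar b z = if y = z then 2 ^ n else 0 := by
  have hcoord (s t : ZMod 2) :
      ∑ x : ZMod 2, (-1 : ℂ) ^ (x * s).val * (-1) ^ (x * t).val = if s = t then 2 else 0 := by
    rw [show (univ : Finset (ZMod 2)) = {0, 1} from rfl, sum_pair zero_ne_one]
    obtain rfl | rfl : s = 0 ∨ s = 1 := by decide +revert
    all_goals obtain rfl | rfl : t = 0 ∨ t = 1 := by decide +revert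
    all_goals norm_num [ZMod.val_one]
  simp_rw [walshChar, ← prod_pow_eq_pow_sum, ← prod_mul_distrib]
  rw [← Fintype.prod_sum fun i x => (-1 : ℂ) ^ (x * y i).val * (-1) ^ (x * z i).val]
  simp_rw [hcoord, Fintype.prod_ite_zero, prod_const, card_univ, Fintype.card_fin, ← funext_iff]

lemma sum_normSq_sum_walshChar_mul (v : (Fin n → ZMod 2) → ℂ) :
    ∑ b, Complex.normSq (∑ y, walshChar b y * v y) = 2 ^ n * ∑ y, Complex.normSq (v y) := by
  have hexpand (b : Fin n → ZMod 2) : ((Complex.normSq (∑ y, walshChar b y * v y) : ℝ) : ℂ)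
      = ∑ y, ∑ z, walshChar b y * walshChar b z * (v y * conj (v z)) := by
    rw [← Complex.mul_conj, map_sum, sum_mul_sum]
    simp [walshChar, mul_mul_mul_comm]
  apply Complex.ofReal_injective
  push_cast
  calc ∑ b, ((Complex.normSq (∑ y, walshChar b y * v y) : ℝ) : ℂ)
      = ∑ y, ∑ z, (∑ b, walshChar b y * walshChar b z) * (v y * conj (v z)) := by
        simp_rw [hexpand, sum_mul]
        rw [sum_comm]
        exact sum_congr rfl fun y _ => sum_comm
    _ = ∑ y, 2 ^ n * (v y * conj (v y)) := by
        simp [sum_walshChar_mul_walshChar, ite_mul]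
    _ = 2 ^ n * ∑ y, ((Complex.normSq (v y) : ℝ) : ℂ) := by
        simp_rw [← mul_sum, Complex.mul_conj]

lemma trace_pauli_mul_proj (a b : Fin n → ZMod 2) (u : (Fin n → ZMod 2) → ℂ) :
    (pauli a b * proj u).trace = Complex.I ^ (∑ i, (a i * b i).val) *
      ∑ y, walshChar b y * (u y * conj (u (y + a))) := by
  simp only [Matrix.trace, Matrix.diag, Matrix.mul_apply, pauli, proj, walshChar, Matrix.of_apply]
  rw [sum_comm, mul_sum]
  refine sum_congr rfl fun y _ => ?_
  rw [sum_eq_single (y + a) (fun x _ hx => by rw [if_neg hx, zero_mul]) (by simp)]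
  simp [mul_assoc]

lemma normSq_trace_pauli_mul_proj (a b : Fin n → ZMod 2) (u : (Fin n → ZMod 2) → ℂ) :
    Complex.normSq (pauli a b * proj u).trace =
      Complex.normSq (∑ y, walshChar b y * (u y * conj (u (y + a)))) := by
  rw [trace_pauli_mul_proj, map_mul, map_pow, Complex.normSq_I, one_pow, one_mul]

lemma norm_trace_pauli_mul_proj_le (a b : Fin n → ZMod 2) (u : (Fin n → ZMod 2) → ℂ) :
    ‖(pauli a b * proj u).trace‖ ≤ ∑ x, Complex.normSq (u x) := by
  have hshift : ∑ y, ‖u (y + a)‖ ^ 2 = ∑ y, ‖u y‖ ^ 2 :=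
    Equiv.sum_comp (Equiv.addRight a) fun y => ‖u y‖ ^ 2
  calc ‖(pauli a b * proj u).trace‖
      ≤ ∑ y, ‖u y‖ * ‖u (y + a)‖ := by
        rw [trace_pauli_mul_proj, norm_mul, norm_pow, Complex.norm_I, one_pow, one_mul]
        refine (norm_sum_le _ _).trans_eq (sum_congr rfl fun y _ => ?_)
        simp [norm_walshChar]
    _ ≤ ∑ y, (‖u y‖ ^ 2 + ‖u (y + a)‖ ^ 2) / 2 :=
        sum_le_sum fun y _ => by nlinarith [two_mul_le_add_sq ‖u y‖ ‖u (y + a)‖]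
    _ = ∑ x, Complex.normSq (u x) := by
        rw [← sum_div, sum_add_distrib, hshift]
        simp [Complex.sq_norm]

lemma sum_normSq_trace_pauli_mul_proj (u : (Fin n → ZMod 2) → ℂ) :
    ∑ p : (Fin n → ZMod 2) × (Fin n → ZMod 2), Complex.normSq (pauli p.1 p.2 * proj u).trace
      = 2 ^ n * (∑ x, Complex.normSq (u x)) ^ 2 := by
  have hshift (y : Fin n → ZMod 2) : ∑ a, Complex.normSq (u (y + a)) = ∑ x, Complex.normSq (u x) :=
    Equiv.sum_comp (Equiv.addLeft y) fun x => Complex.normSq (u x)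
  rw [Fintype.sum_prod_type]
  simp_rw [normSq_trace_pauli_mul_proj, sum_normSq_sum_walshChar_mul, ← mul_sum, map_mul,
    Complex.normSq_conj]
  rw [sum_comm]
  simp_rw [← mul_sum, hshift, ← sum_mul, sq]

lemma xi_nonneg (ρ : Matrix (Fin n → ZMod 2) (Fin n → ZMod 2) ℂ)
    (p : (Fin n → ZMod 2) × (Fin n → ZMod 2)) : 0 ≤ xi ρ p := by
  unfold xi
  exact div_nonneg (Complex.normSq_nonneg _) (by positivity)

lemma xi_proj_le {u : (Fin n → ZMod 2) → ℂ} (hu : ∑ x, Complex.normSq (u x) = 1)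
    (p : (Fin n → ZMod 2) × (Fin n → ZMod 2)) :
    xi (proj u) p ≤ (2 ^ n)⁻¹ := by
  have h := norm_trace_pauli_mul_proj_le p.1 p.2 u
  rw [hu] at h
  rw [xi, div_eq_mul_inv, ← Complex.sq_norm]
  exact mul_le_of_le_one_left (by positivity) (pow_le_one₀ (norm_nonneg _) h)

lemma sum_xi_proj {u : (Fin n → ZMod 2) → ℂ} (hu : ∑ x, Complex.normSq (u x) = 1) :
    ∑ p, xi (proj u) p = 1 := by
  simp only [xi, ← sum_div, sum_normSq_trace_pauli_mul_proj, hu]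
  simp

end Pauli

lemma MStab_eq_renyiEntropy_xi_sub (α : ℝ) {n : ℕ}
    (ρ : Matrix (Fin n → ZMod 2) (Fin n → ZMod 2) ℂ) :
    MStab α ρ = renyiEntropy α (xi ρ) - n :=
  rfl

lemma exists_xi_proj_eq_uniformOn {n : ℕ} {u : (Fin n → ZMod 2) → ℂ}
    (hu : ∑ x, Complex.normSq (u x) = 1) (hstab : IsStabVec u) :
    ∃ s : Finset ((Fin n → ZMod 2) × (Fin n → ZMod 2)),
      #s = 2 ^ n ∧ xi (proj u) = uniformOn s := by
  classical
  set s := {p : (Fin n → ZMod 2) × (Fin n → ZMod 2) |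
      Complex.normSq ((pauli p.1 p.2 * proj u).trace) = 1}.toFinset
  have hcard : #s = 2 ^ n := by rw [← Set.ncard_eq_toFinset_card']; exact hstab
  refine ⟨s, hcard, eq_uniformOn_of_eq_inv_card (xi_nonneg _) (sum_xi_proj hu)
    (card_pos.1 (by rw [hcard]; positivity)) fun p hp => ?_⟩
  rw [Set.mem_toFinset, Set.mem_ofPred_eq] at hp
  rw [xi, hp, hcard, one_div, Nat.cast_pow, Nat.cast_ofNat]

/-- 0 ≤ M_α(ψ) ≤ n for any pure state and α ≥ 0, with M_α(ψ) = 0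
whenever ψ is a pure stabilizer state. -/
theorem MStab_nonneg_le {n : ℕ} (α : ℝ) (hα : 0 ≤ α)
    (u : (Fin n → ZMod 2) → ℂ) (hu : ∑ x, Complex.normSq (u x) = 1) :
    0 ≤ MStab α (proj u) ∧ MStab α (proj u) ≤ n ∧
    (IsStabVec u → MStab α (proj u) = 0) := by
  have hq0 := xi_nonneg (proj u)
  have hq1 := sum_xi_proj hu
  have hlogb : logb 2 (2 ^ n : ℝ) = n := by rw [logb_pow, logb_self_eq_one one_lt_two, mul_one]
  rw [MStab_eq_renyiEntropy_xi_sub]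
  refine ⟨?_, ?_, fun hstab => ?_⟩
  · linarith [logb_le_renyiEntropy (by positivity) hq0 hq1 (xi_proj_le hu) α]
  · have hcard : (Fintype.card ((Fin n → ZMod 2) × (Fin n → ZMod 2)) : ℝ) = 2 ^ n * 2 ^ n := by
      simp
    have h := renyiEntropy_le_logb_card hα hq0 hq1
    rw [hcard, logb_mul (by positivity) (by positivity), hlogb] at h
    linarith
  · obtain ⟨s, hs, hxi⟩ := exists_xi_proj_eq_uniformOn hu hstab
    rw [hxi, renyiEntropy_uniformOn α (card_pos.1 (by rw [hs]; positivity)), hs]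
    push_cast
    rw [hlogb, sub_self]
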